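/- Let k ≥ 1, let G be a graph and F ⊆ E^G, and let G̃ be the graph obtained from G by subdividing every edge (k−1) times (replacing every edge by a path of length k), with F̃ the set of edges of G̃ appearing in the subdivision of an edge of F. If G̃ has a k-good drawing with respect to F̃, then G̃ has a k-good drawing with respect to F̃ in which, additionally, every edge is involved in at most one crossing. -/

import Mathlib

lemma sym2_out_eq {α : Type} (s : Sym2 α) : s = s((Quot.out s).1, (Quot.out s).2) := by
  exact (Quot.out_eq s).symm

lemma sym2_out_fst_mem {α : Type} (s : Sym2 α) : (Quot.out s).1 ∈ s := by
  set p := Quot.out s with hp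
  rw [sym2_out_eq s, ← hp]
  exact Sym2.mem_mk_left _ _

lemma sym2_out_snd_mem {α : Type} (s : Sym2 α) : (Quot.out s).2 ∈ s := by
  set p := Quot.out s with hp
  rw [sym2_out_eq s, ← hp]
  exact Sym2.mem_mk_right _ _

lemma sym2_out_ne {α : Type} (s : Sym2 α) (h : ¬ s.IsDiag) : (Quot.out s).1 ≠ (Quot.out s).2 := by
  intro he
  exact h (by rw [sym2_out_eq s]; exact Sym2.mk_isDiag_iff.mpr he)

/-! ### Basic multigraphs -/

/-- A multigraph: undirected, loop-free, possibly with multiple (parallel) edges.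
Each edge is assigned its unordered pair of (distinct) endpoints. -/
structure MGraph where
  V : Type
  E : Type
  ends : E → Sym2 V
  loopless : ∀ e : E, ¬ (ends e).IsDiag

namespace MGraph

/-- Walks in a multigraph. -/
inductive Walk (G : MGraph) : G.V → G.V → Type where
  | nil (v : G.V) : Walk G v v
  | cons {u v w : G.V} (e : G.E) (he : G.ends e = s(u, v)) (p : Walk G v w) : Walk G u w

namespace Walk

variable {G : MGraph}

/-- The list of vertices visited by a walk (in order, including both endpoints). -/
def support : ∀ {u v : G.V}, G.Walk u v → List G.V
  | u, _, .nil _ => [u]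
  | u, _, .cons _ _ p => u :: p.support

/-- The list of edges traversed by a walk. -/
def edgeList : ∀ {u v : G.V}, G.Walk u v → List G.E
  | _, _, .nil _ => []
  | _, _, .cons e _ p => e :: p.edgeList

lemma start_mem_support : ∀ {u v : G.V} (w : G.Walk u v), u ∈ w.support
  | _, _, .nil _ => List.mem_singleton_self _
  | _, _, .cons _ _ _ => List.mem_cons_self

lemma end_mem_support : ∀ {u v : G.V} (w : G.Walk u v), v ∈ w.support
  | _, _, .nil _ => List.mem_singleton_self _
  | _, _, .cons _ _ p => List.mem_cons_of_mem _ (end_mem_support p)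

lemma mem_support_of_mem_edgeList :
    ∀ {u v : G.V} (w : G.Walk u v) (f : G.E) (x : G.V),
      f ∈ w.edgeList → x ∈ G.ends f → x ∈ w.support
  | _, _, .nil _, f, x, hf, _ => by simp [edgeList] at hf
  | u, v, .cons e he p, f, x, hf, hx => by
      rcases List.mem_cons.mp hf with h | h
      · subst h
        rw [he, Sym2.mem_iff] at hx
        rcases hx with rfl | rfl
        · exact start_mem_support _
        · exact List.mem_cons_of_mem _ (start_mem_support p)
      · exact List.mem_cons_of_mem _ (mem_support_of_mem_edgeList p f x h hx)

/-- A walk is a path if it visits no vertex twice. -/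
def IsPath {u v : G.V} (w : G.Walk u v) : Prop := w.support.Nodup

/-- A closed walk is a cycle if it is nontrivial, repeats no edge,
and repeats no vertex except the first = last one. -/
def IsCycleW {u : G.V} (w : G.Walk u u) : Prop :=
  w.edgeList ≠ [] ∧ w.edgeList.Nodup ∧ w.support.tail.Nodup

end Walk

/-! ### Subgraphs -/

/-- A subgraph of `G`, given by a set of vertices and a set of edges all of whose
endpoints belong to the vertex set. -/
structure Subgraph (G : MGraph) where
  verts : Set G.V
  edges : Set G.E
  closed : ∀ e ∈ edges, ∀ v ∈ G.ends e, v ∈ verts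

namespace Subgraph

variable {G : MGraph}

/-- The subgraph consisting of all of `G`. -/
def top (G : MGraph) : G.Subgraph where
  verts := Set.univ
  edges := Set.univ
  closed := fun _ _ _ _ => Set.mem_univ _

/-- Union of two subgraphs. -/
def union (A B : G.Subgraph) : G.Subgraph where
  verts := A.verts ∪ B.verts
  edges := A.edges ∪ B.edges
  closed := by
    rintro e (he | he) v hv
    · exact Or.inl (A.closed e he v hv)
    · exact Or.inr (B.closed e he v hv)

/-- Union of a set of subgraphs. -/
def sUnion (𝒮 : Set G.Subgraph) : G.Subgraph where
  verts := ⋃ S ∈ 𝒮, S.verts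
  edges := ⋃ S ∈ 𝒮, S.edges
  closed := by
    intro e he v hv
    simp only [Set.mem_iUnion] at he ⊢
    obtain ⟨S, hS, heS⟩ := he
    exact ⟨S, hS, S.closed e heS v hv⟩

/-- Delete a set of vertices (and all edges touching them) from a subgraph. -/
def delete (S : G.Subgraph) (A : Set G.V) : G.Subgraph where
  verts := S.verts \ A
  edges := {e ∈ S.edges | ∀ v ∈ G.ends e, v ∉ A}
  closed := fun e he v hv => ⟨S.closed e he.1 v hv, he.2 v hv⟩

/-- The subgraph, viewed as a graph in its own right. -/
def toGraph (S : G.Subgraph) : MGraph where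
  V := {v : G.V // v ∈ S.verts}
  E := {e : G.E // e ∈ S.edges}
  ends := fun e => (G.ends e.val).attachWith (fun v hv => S.closed e.val e.2 v hv)
  loopless := by
    intro e he
    have h2 := Sym2.IsDiag.map (f := Subtype.val) he
    rw [Sym2.attachWith_map_subtypeVal] at h2
    exact G.loopless e.val h2

lemma toGraph_ends {S : G.Subgraph} (e : S.toGraph.E) {v w : G.V}
    (hvw : G.ends e.val = s(v, w)) (hv : v ∈ S.verts) (hw : w ∈ S.verts) :
    S.toGraph.ends e = s((⟨v, hv⟩ : {v : G.V // v ∈ S.verts}), ⟨w, hw⟩) := by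
  apply Sym2.map.injective Subtype.val_injective
  show Sym2.map Subtype.val ((G.ends e.val).attachWith _) = _
  rw [Sym2.attachWith_map_subtypeVal, Sym2.map_pair_eq, hvw]

lemma toGraph_mem_ends {S : G.Subgraph} (e : S.toGraph.E) (x : S.toGraph.V) :
    x ∈ S.toGraph.ends e ↔ x.val ∈ G.ends e.val := by
  constructor
  · intro hx
    have h2 : x.val ∈ Sym2.map Subtype.val (S.toGraph.ends e) :=
      Sym2.mem_map.mpr ⟨x, hx, rfl⟩
    rwa [show Sym2.map Subtype.val (S.toGraph.ends e) = G.ends e.val from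
      Sym2.attachWith_map_subtypeVal _] at h2
  · intro hx
    have h2 : x.val ∈ Sym2.map Subtype.val (S.toGraph.ends e) := by
      rwa [show Sym2.map Subtype.val (S.toGraph.ends e) = G.ends e.val from
        Sym2.attachWith_map_subtypeVal _]
    obtain ⟨y, hy, hyx⟩ := Sym2.mem_map.mp h2
    rwa [show y = x from Subtype.ext hyx] at hy

/-- Reachability within a subgraph: a walk of `G` all of whose vertices and
edges belong to the subgraph. -/
def Reach (S : G.Subgraph) (u v : G.V) : Prop :=
  ∃ w : G.Walk u v, (∀ x ∈ w.support, x ∈ S.verts) ∧ ∀ e ∈ w.edgeList, e ∈ S.edges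

/-- A subgraph is connected if it is nonempty and any two of its vertices are
joined by a walk inside it. -/
def Connected (S : G.Subgraph) : Prop :=
  S.verts.Nonempty ∧ ∀ u ∈ S.verts, ∀ v ∈ S.verts, S.Reach u v

end Subgraph

/-- The induced subgraph on a vertex set `A`. -/
def induce (G : MGraph) (A : Set G.V) : G.Subgraph where
  verts := A
  edges := {e | ∀ v ∈ G.ends e, v ∈ A}
  closed := fun _ he v hv => he v hv

/-- `G ∖ A`: delete the vertices in `A`, keeping only edges with no endpoint in `A`. -/
def deleteVerts (G : MGraph) (A : Set G.V) : G.Subgraph :=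
  G.induce Aᶜ

end MGraph
/-! ### Drawings in the plane -/

/-- A drawing of a graph in the plane.  Every vertex is assigned a point and every
edge a simple curve (given by an injective continuous parametrization on `[0,1]`)
joining the images of its endpoints; distinct vertices get distinct points;
distinct edge curves meet in at most one interior point; no curve passes through the
image of a vertex other than its endpoints; and no point which is not the image of a
vertex lies on more than two edge curves. -/
structure Drawing (G : MGraph) where
  vpos : G.V → ℝ × ℝ
  par : G.E → ℝ → ℝ × ℝ
  par_cont : ∀ e, ContinuousOn (par e) (Set.Icc 0 1)
  par_inj : ∀ e, Set.InjOn (par e) (Set.Icc 0 1)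
  ends_match : ∀ e, ∃ v w : G.V, G.ends e = s(v, w) ∧ par e 0 = vpos v ∧ par e 1 = vpos w
  vpos_inj : Function.Injective vpos
  arcs_inter : ∀ e f : G.E, e ≠ f →
    Set.Subsingleton (par e '' Set.Ioo 0 1 ∩ par f '' Set.Ioo 0 1)
  vertex_on_arc : ∀ (e : G.E) (v : G.V), vpos v ∈ par e '' Set.Icc 0 1 → v ∈ G.ends e
  at_most_two : ∀ x : ℝ × ℝ, x ∉ Set.range vpos →
    ∀ e₁ e₂ e₃ : G.E, x ∈ par e₁ '' Set.Icc 0 1 → x ∈ par e₂ '' Set.Icc 0 1 →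
      x ∈ par e₃ '' Set.Icc 0 1 → e₁ = e₂ ∨ e₁ = e₃ ∨ e₂ = e₃

namespace Drawing

variable {G : MGraph}

/-- The curve drawn for the edge `e`. -/
def arc (Δ : Drawing G) (e : G.E) : Set (ℝ × ℝ) := Δ.par e '' Set.Icc 0 1

/-- A crossing of a drawing: a point which is not the image of a vertex and lies on
two distinct edge curves. -/
def IsCrossing (Δ : Drawing G) (x : ℝ × ℝ) : Prop :=
  x ∉ Set.range Δ.vpos ∧ ∃ e f : G.E, e ≠ f ∧ x ∈ Δ.arc e ∧ x ∈ Δ.arc f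

/-- The set of crossings of a drawing. -/
def crossings (Δ : Drawing G) : Set (ℝ × ℝ) := {x | Δ.IsCrossing x}

/-- The drawing has at most `k` crossings. -/
def CrossingsAtMost (Δ : Drawing G) (k : ℕ) : Prop :=
  Δ.crossings.Finite ∧ Δ.crossings.ncard ≤ k

/-- The edge `e` is involved in some crossing of the drawing. -/
def Involved (Δ : Drawing G) (e : G.E) : Prop :=
  ∃ x : ℝ × ℝ, Δ.IsCrossing x ∧ x ∈ Δ.arc e

/-- An `l`-good drawing with respect to a set `F` of forbidden edges:
at most `l` crossings, and no forbidden edge is involved in any crossing. -/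
def IsGood (Δ : Drawing G) (l : ℕ) (F : Set G.E) : Prop :=
  Δ.CrossingsAtMost l ∧ ∀ e ∈ F, ¬ Δ.Involved e

/-- The image of a subgraph under a drawing: all vertex points and edge curves of
the subgraph. -/
def subImage (Δ : Drawing G) (S : G.Subgraph) : Set (ℝ × ℝ) :=
  Δ.vpos '' S.verts ∪ ⋃ e ∈ S.edges, Δ.arc e

/-- The restriction of a drawing to a subgraph. -/
def restrict (Δ : Drawing G) (S : G.Subgraph) : Drawing S.toGraph where
  vpos := fun v => Δ.vpos v.val
  par := fun e => Δ.par e.val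
  par_cont := fun e => Δ.par_cont e.val
  par_inj := fun e => Δ.par_inj e.val
  ends_match := by
    intro e
    obtain ⟨v, w, hvw, h0, h1⟩ := Δ.ends_match e.val
    have hv : v ∈ S.verts := S.closed e.val e.2 v (by rw [hvw]; exact Sym2.mem_mk_left _ _)
    have hw : w ∈ S.verts := S.closed e.val e.2 w (by rw [hvw]; exact Sym2.mem_mk_right _ _)
    exact ⟨⟨v, hv⟩, ⟨w, hw⟩, MGraph.Subgraph.toGraph_ends e hvw hv hw, h0, h1⟩
  vpos_inj := fun v w h => Subtype.ext (Δ.vpos_inj h)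
  arcs_inter := fun e f hef =>
    Δ.arcs_inter e.val f.val (fun h => hef (Subtype.ext h))
  vertex_on_arc := by
    intro e v hv
    exact (MGraph.Subgraph.toGraph_mem_ends e v).mpr (Δ.vertex_on_arc e.val v.val hv)
  at_most_two := by
    intro x hx e₁ e₂ e₃ h₁ h₂ h₃
    by_cases hxr : x ∈ Set.range Δ.vpos
    · obtain ⟨u, hu⟩ := hxr
      have hu1 : u ∈ G.ends e₁.val := Δ.vertex_on_arc e₁.val u (by rw [hu]; exact h₁)
      have huS : u ∈ S.verts := S.closed e₁.val e₁.2 u hu1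
      exact absurd ⟨⟨u, huS⟩, hu⟩ hx
    · rcases Δ.at_most_two x hxr e₁.val e₂.val e₃.val h₁ h₂ h₃ with h | h | h
      · exact Or.inl (Subtype.ext h)
      · exact Or.inr (Or.inl (Subtype.ext h))
      · exact Or.inr (Or.inr (Subtype.ext h))

end Drawing

namespace MGraph

/-- A graph is planar if it has a drawing without crossings. -/
def IsPlanar (G : MGraph) : Prop := ∃ Δ : Drawing G, Δ.crossings = ∅

/-- The crossing number of `G` is at most `k`. -/
def CrossingNumberLE (G : MGraph) (k : ℕ) : Prop :=
  ∃ Δ : Drawing G, Δ.CrossingsAtMost k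

end MGraph

/-- A simple closed curve in the plane: a continuous injective image of a circle. -/
def IsSimpleClosedCurve (s : Set (ℝ × ℝ)) : Prop :=
  ∃ f : AddCircle (1 : ℝ) → ℝ × ℝ, Continuous f ∧ Function.Injective f ∧ Set.range f = s
/-! ### H-components -/

namespace MGraph

variable {G : MGraph}

/-- The subgraph consisting of a single edge together with its endpoints. -/
def edgeComp (G : MGraph) (e : G.E) : G.Subgraph where
  verts := {v | v ∈ G.ends e}
  edges := {e}
  closed := by
    rintro f rfl v hv
    exact hv

/-- For a subgraph `H` of `G` and a vertex `u ∉ H`, the `H`-component of `G`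
determined by `u`: the connected component of `G ∖ H` containing `u`, together with
all edges joining it to `H` and their endpoints in `H`. -/
def attachComp (G : MGraph) (H : G.Subgraph) (u : G.V) : G.Subgraph where
  verts := {v | (G.deleteVerts H.verts).Reach u v} ∪
    {v | v ∈ H.verts ∧ ∃ (e : G.E) (w : G.V), G.ends e = s(w, v) ∧
      (G.deleteVerts H.verts).Reach u w}
  edges := {e | e ∈ (G.deleteVerts H.verts).edges ∧
      ∀ v ∈ G.ends e, (G.deleteVerts H.verts).Reach u v} ∪
    {e | ∃ (w v : G.V), G.ends e = s(w, v) ∧ (G.deleteVerts H.verts).Reach u w ∧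
      v ∈ H.verts}
  closed := by
    rintro e (⟨-, he⟩ | ⟨w, v, hwv, hw, hv⟩) x hx
    · exact Or.inl (he x hx)
    · rw [hwv, Sym2.mem_iff] at hx
      rcases hx with rfl | rfl
      · exact Or.inl hw
      · exact Or.inr ⟨hv, e, w, hwv, hw⟩

/-- `C` is an `H`-component of `G`: either a connected component of `G ∖ H` together
with the edges joining it to `H` and their endpoints in `H`, or a single edge of
`G` outside `H` with both endpoints in `H`, together with its endpoints. -/
def IsHComp (G : MGraph) (H C : G.Subgraph) : Prop :=
  (∃ u : G.V, u ∉ H.verts ∧ C = G.attachComp H u) ∨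
  (∃ e : G.E, e ∉ H.edges ∧ (∀ v ∈ G.ends e, v ∈ H.verts) ∧ C = G.edgeComp e)

/-! ### Graph embeddings (subgraph copies) -/

/-- An embedding of the graph `H` into the graph `G`: injective maps on vertices and
edges that respect endpoints.  The image is a subgraph of `G` isomorphic to `H`. -/
structure Emb (H G : MGraph) where
  vmap : H.V → G.V
  emap : H.E → G.E
  vmap_inj : Function.Injective vmap
  emap_inj : Function.Injective emap
  ends_map : ∀ e : H.E, G.ends (emap e) = (H.ends e).map vmap

end MGraph

/-! ### Topological embeddings -/

/-- A topological embedding of `H` into `G`: an injective map on vertices together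
with, for every edge `e` of `H`, a path in `G` (recorded by its vertex set
`pVerts e` and edge set `pEdges e`) joining the images of the endpoints of `e` and
avoiding the images of all other vertices, such that the paths of distinct edges are
internally disjoint. -/
structure TopEmb (H G : MGraph) where
  vmap : H.V → G.V
  vmap_inj : Function.Injective vmap
  pVerts : H.E → Set G.V
  pEdges : H.E → Set G.E
  is_path : ∀ e : H.E, ∃ (a b : H.V) (w : G.Walk (vmap a) (vmap b)),
    H.ends e = s(a, b) ∧ w.IsPath ∧
    pVerts e = {x | x ∈ w.support} ∧ pEdges e = {f | f ∈ w.edgeList} ∧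
    ∀ u : H.V, u ∉ H.ends e → vmap u ∉ w.support
  int_disjoint : ∀ e f : H.E, e ≠ f → ∀ x ∈ pVerts e ∩ pVerts f,
    ∃ a : H.V, a ∈ H.ends e ∧ a ∈ H.ends f ∧ x = vmap a
  edge_disjoint : ∀ e f : H.E, e ≠ f → pEdges e ∩ pEdges f = ∅

namespace TopEmb

variable {H G : MGraph}

/-- The image `h(S)` of a subgraph `S ⊆ H` under a topological embedding `h`. -/
def imageOf (h : TopEmb H G) (S : H.Subgraph) : G.Subgraph where
  verts := (h.vmap '' S.verts) ∪ ⋃ e ∈ S.edges, h.pVerts e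
  edges := ⋃ e ∈ S.edges, h.pEdges e
  closed := by
    intro f hf v hv
    simp only [Set.mem_iUnion] at hf
    obtain ⟨e, he, hfe⟩ := hf
    obtain ⟨a, b, w, -, -, hV, hE, -⟩ := h.is_path e
    right
    simp only [Set.mem_iUnion]
    refine ⟨e, he, ?_⟩
    rw [hV]
    rw [hE] at hfe
    exact MGraph.Walk.mem_support_of_mem_edgeList w f v hfe hv

/-- The image `h(H)` of a topological embedding. -/
def image (h : TopEmb H G) : G.Subgraph := h.imageOf (MGraph.Subgraph.top H)

end TopEmb
/-! ### Hexagonal grids -/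

/-- The vertex type of the hexagonal grid of radius `r`: the vertices are arranged on
`r` concentric principal cycles, the `i`-th of which (counting from the inside,
starting at `i = 0`) has `6 * (2 * i + 1)` vertices. -/
abbrev HexV (r : ℕ) : Type := (i : Fin r) × ZMod (6 * (2 * i.val + 1))

/-- The endpoint on the `i`-th principal cycle of the `k`-th spoke joining the `i`-th
and the `(i+1)`-st principal cycle. -/
def spokeOutV (r : ℕ) (i : Fin (r - 1)) (k : ℕ) : HexV r :=
  ⟨⟨i.val, by have := i.isLt; omega⟩,
    ((k / (i.val + 1)) * (2 * i.val + 1) + 2 * (k % (i.val + 1)) : ℕ)⟩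

/-- The endpoint on the `(i+1)`-st principal cycle of the `k`-th spoke joining the
`i`-th and the `(i+1)`-st principal cycle. -/
def spokeInV (r : ℕ) (i : Fin (r - 1)) (k : ℕ) : HexV r :=
  ⟨⟨i.val + 1, by have := i.isLt; omega⟩,
    ((k / (i.val + 1)) * (2 * (i.val + 1) + 1) + 2 * (k % (i.val + 1)) + 1 : ℕ)⟩

/-- The hexagonal grid of radius `r` (`r` concentric cycles of hexagons): its vertices
lie on `r` principal cycles, the `i`-th principal cycle (0-indexed) having
`6 * (2 * i + 1)` vertices and being joined to the next one by `6 * (i + 1)` spokes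
attached alternatingly. -/
def hexGrid (r : ℕ) : MGraph where
  V := HexV r
  E := ((i : Fin r) × ZMod (6 * (2 * i.val + 1))) ⊕ ((i : Fin (r - 1)) × ZMod (6 * (i.val + 1)))
  ends := fun e => match e with
    | .inl ⟨i, j⟩ => s((⟨i, j⟩ : HexV r), ⟨i, j + 1⟩)
    | .inr ⟨i, k⟩ => s(spokeOutV r i k.val, spokeInV r i k.val)
  loopless := by
    rintro (⟨i, j⟩ | ⟨i, k⟩) h
    · rw [Sym2.mk_isDiag_iff] at h
      have hj : j = j + 1 := eq_of_heq (Sigma.ext_iff.mp h).2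
      have h1 : (1 : ZMod (6 * (2 * i.val + 1))) = 0 := left_eq_add.mp hj
      haveI : Fact (1 < 6 * (2 * i.val + 1)) := ⟨by omega⟩
      exact one_ne_zero h1
    · rw [Sym2.mk_isDiag_iff] at h
      have := congrArg (fun v : HexV r => v.1.val) h
      simp [spokeOutV, spokeInV] at this

@[simp] lemma hexGrid_ends_inl (r : ℕ) (i : Fin r) (j : ZMod (6 * (2 * i.val + 1))) :
    (hexGrid r).ends (Sum.inl ⟨i, j⟩) = s((⟨i, j⟩ : HexV r), ⟨i, j + 1⟩) := rfl

@[simp] lemma hexGrid_ends_inr (r : ℕ) (i : Fin (r - 1)) (k : ZMod (6 * (i.val + 1))) :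
    (hexGrid r).ends (Sum.inr ⟨i, k⟩) = s(spokeOutV r i k.val, spokeInV r i k.val) := rfl

/-- The `i`-th principal cycle of the hexagonal grid of radius `r` (`i` is 0-indexed,
so `i = ⟨0, _⟩` is the innermost principal cycle `C_1` of the paper and
`i = ⟨r-1, _⟩` the outermost one `C_r`). -/
def principalCycle (r : ℕ) (i : Fin r) : (hexGrid r).Subgraph where
  verts := {v | v.1 = i}
  edges := {e | ∃ j, e = Sum.inl ⟨i, j⟩}
  closed := by
    rintro e ⟨j, rfl⟩ v hv
    rw [hexGrid_ends_inl] at hv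
    replace hv := Sym2.mem_iff.mp hv
    rcases hv with rfl | rfl <;> rfl

/-- The subgrid `H^i` of the hexagonal grid bounded by the `i`-th principal cycle:
the induced subgraph on the vertices of the principal cycles `C_1, …, C_i`. -/
def hexSubgridLE (r : ℕ) (i : Fin r) : (hexGrid r).Subgraph :=
  (hexGrid r).induce {v | v.1 ≤ i}

/-- The subgrid `H^i ∖ C_i` of the hexagonal grid: everything strictly inside the
`i`-th principal cycle. -/
def hexSubgridLT (r : ℕ) (i : Fin r) : (hexGrid r).Subgraph :=
  (hexGrid r).induce {v | v.1 < i}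

namespace TopEmb

variable {G : MGraph} {r : ℕ}

/-- An attachment of a topological embedding `h : H_r → G`: an `h(H_r)`-component of
`G` that intersects the interior `h(H_r ∖ C_r)` of `h(H_r)`. -/
def IsAttachment (h : TopEmb (hexGrid r) G) (C : G.Subgraph) : Prop :=
  G.IsHComp h.image C ∧
  (C.verts ∩ (h.imageOf ((hexGrid r).deleteVerts {v | v.1.val = r - 1})).verts).Nonempty

/-- A topological embedding `h : H_r → G` is flat if the union of `h(H_r)` with all
its attachments is planar. -/
def Flat (h : TopEmb (hexGrid r) G) : Prop :=
  ((h.image.union (MGraph.Subgraph.sUnion {C | h.IsAttachment C})).toGraph).IsPlanar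

/-- The subgraph `K_i` of `G`: the image `h(H^i)` together with all attachments of
`h(H_r)` that intersect the interior `h(H^i ∖ C_i)`. -/
def K (h : TopEmb (hexGrid r) G) (i : Fin r) : G.Subgraph :=
  (h.imageOf (hexSubgridLE r i)).union
    (MGraph.Subgraph.sUnion {C | h.IsAttachment C ∧
      (C.verts ∩ (h.imageOf (hexSubgridLT r i)).verts).Nonempty})

/-- The edge set `F_i`: all edges of `K_i` having at least one endpoint on `h(C_i)`. -/
def Fset (h : TopEmb (hexGrid r) G) (i : Fin r) : Set G.E :=
  {e | e ∈ (h.K i).edges ∧ ∃ v ∈ G.ends e, v ∈ (h.imageOf (principalCycle r i)).verts}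

/-- The subgraph `I_i = K_i ∖ h(C_i)`: delete from `K_i` all vertices of `h(C_i)` and
all edges incident with them. -/
def Iset (h : TopEmb (hexGrid r) G) (i : Fin r) : G.Subgraph :=
  (h.K i).delete (h.imageOf (principalCycle r i)).verts

end TopEmb
/-! ### Graph constructions -/

namespace MGraph

open Classical in
/-- The graph obtained from `G` by contracting the (induced) subgraph on a vertex set
`A` to a single new vertex: all vertices of `A` and all edges with both endpoints in
`A` are deleted, a new vertex (the vertex `Sum.inr ()`) is added, and every edge with
exactly one endpoint in `A` now joins its other endpoint to the new vertex. -/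
noncomputable def contract (G : MGraph) (A : Set G.V) : MGraph where
  V := {v : G.V // v ∉ A} ⊕ Unit
  E := {e : G.E // ∃ v ∈ G.ends e, v ∉ A}
  ends := fun e => (G.ends e.val).map
    (fun v => if h : v ∈ A then Sum.inr () else Sum.inl ⟨v, h⟩)
  loopless := by
    intro e he
    obtain ⟨v, hv, hvA⟩ := e.2
    obtain ⟨⟨a, b⟩, hab⟩ := Quot.exists_rep (G.ends e.val)
    have hab' : G.ends e.val = s(a, b) := hab.symm
    have hne : a ≠ b := fun hh => G.loopless e.val (by rw [hab']; exact Sym2.mk_isDiag_iff.mpr hh)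
    rw [hab'] at he hv
    rw [Sym2.map_pair_eq, Sym2.mk_isDiag_iff] at he
    rw [Sym2.mem_iff] at hv
    by_cases ha : a ∈ A <;> by_cases hb : b ∈ A
    · rcases hv with rfl | rfl <;> exact hvA (by assumption)
    · rw [dif_pos ha, dif_neg hb] at he; exact absurd he (by simp)
    · rw [dif_neg ha, dif_pos hb] at he; exact absurd he (by simp)
    · rw [dif_neg ha, dif_neg hb] at he
      exact hne (congrArg Subtype.val (Sum.inl_injective he))

/-- The graph `G^{e₁ × e₂}` obtained from `G` by crossing the two distinct edges
`e₁` and `e₂`: delete `e₁` and `e₂`, add a new vertex (the vertex `Sum.inr ()`), and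
add four new edges joining the new vertex to the two endpoints of `e₁` and to the two
endpoints of `e₂`. -/
def crossAt (G : MGraph) (e₁ e₂ : G.E) : MGraph where
  V := G.V ⊕ Unit
  E := {e : G.E // e ≠ e₁ ∧ e ≠ e₂} ⊕
    {p : Fin 2 × G.V // p.2 ∈ G.ends (if p.1 = 0 then e₁ else e₂)}
  ends := fun f => match f with
    | .inl g => (G.ends g.val).map Sum.inl
    | .inr p => s(Sum.inl p.val.2, Sum.inr ())
  loopless := by
    rintro (g | p) h
    · exact G.loopless g.val ((Sym2.isDiag_map Sum.inl_injective).mp h)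
    · rw [Sym2.mk_isDiag_iff] at h
      exact absurd h (by simp)

/-- A set `F` of edges of `G`, viewed as a set of edges of `G^{e₁ × e₂}` (only
meaningful when `e₁, e₂ ∉ F`). -/
def liftF (G : MGraph) (e₁ e₂ : G.E) (F : Set G.E) : Set (G.crossAt e₁ e₂).E :=
  {f | ∃ g : {e : G.E // e ≠ e₁ ∧ e ≠ e₂}, f = Sum.inl g ∧ g.val ∈ F}

/-- The `j`-th vertex (for `0 ≤ j ≤ k`) on the path of length `k` replacing the
edge `e` in the subdivision of `G` in which every edge is subdivided `k - 1` times. -/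
noncomputable def subdivVert (G : MGraph) (k : ℕ) (e : G.E) (j : ℕ) : G.V ⊕ (G.E × Fin (k - 1)) :=
  if h0 : j = 0 then Sum.inl (Quot.out (G.ends e)).1
  else if h : j < k then Sum.inr (e, ⟨j - 1, by omega⟩)
  else Sum.inl (Quot.out (G.ends e)).2

/-- The graph `G̃` obtained from `G` by subdividing every edge `k - 1` times, that
is, replacing every edge by a path of length `k` (for `k ≥ 1`). -/
noncomputable def subdivide (G : MGraph) (k : ℕ) : MGraph where
  V := G.V ⊕ (G.E × Fin (k - 1))
  E := G.E × Fin k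
  ends := fun p => s(G.subdivVert k p.1 p.2.val, G.subdivVert k p.1 (p.2.val + 1))
  loopless := by
    rintro ⟨e, j⟩ h
    dsimp only at h
    rw [Sym2.mk_isDiag_iff] at h
    have hj : j.val < k := j.isLt
    unfold subdivVert at h
    by_cases h0 : j.val = 0
    · rw [dif_pos h0] at h
      by_cases h1 : j.val + 1 < k
      · rw [dif_neg (by omega), dif_pos h1] at h
        exact absurd h (by simp)
      · rw [dif_neg (by omega), dif_neg (by omega)] at h
        exact sym2_out_ne _ (G.loopless e) (Sum.inl_injective h)
    · rw [dif_neg h0, dif_pos hj] at h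
      by_cases h1 : j.val + 1 < k
      · rw [dif_neg (by omega), dif_pos h1] at h
        have h3 := Sum.inr_injective h
        rw [Prod.mk.injEq] at h3
        have h2 : j.val - 1 = j.val + 1 - 1 := congrArg Fin.val h3.2
        omega
      · rw [dif_neg (by omega), dif_neg (by omega)] at h
        exact absurd h (by simp)

/-- The set of edges of the subdivision `G̃` of `G` arising from the subdivision of
an edge in `F`. -/
def subdivF (G : MGraph) (k : ℕ) (F : Set G.E) : Set (G.subdivide k).E :=
  {p | p.1 ∈ F}

/-- The graph `G^{×ē}` obtained from `G` by successively crossing `e 0` with `e 1`,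
`e 2` with `e 3`, …, `e (2l-2)` with `e (2l-1)` (for pairwise distinct edges
`e 0, …, e (2l-1)`): the crossed edges are deleted, `l` new vertices are added (one
for each pair), and each new vertex is joined by four new edges to the endpoints of
the two edges of its pair. -/
def multiCross (G : MGraph) (l : ℕ) (e : Fin (2 * l) → G.E) : MGraph where
  V := G.V ⊕ Fin l
  E := {f : G.E // ∀ i, f ≠ e i} ⊕ {p : Fin (2 * l) × G.V // p.2 ∈ G.ends (e p.1)}
  ends := fun f => match f with
    | .inl g => (G.ends g.val).map Sum.inl
    | .inr p => s(Sum.inl p.val.2,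
        (Sum.inr ⟨p.val.1.val / 2, by have := p.val.1.isLt; omega⟩ : G.V ⊕ Fin l))
  loopless := by
    rintro (g | p) h
    · exact G.loopless g.val ((Sym2.isDiag_map Sum.inl_injective).mp h)
    · rw [Sym2.mk_isDiag_iff] at h
      exact absurd h (by simp)

end MGraph

/-!
For every edge `e` of `G`, the drawn edges of the path replacing `e` form a chain of arcs from one
branch vertex to the other. Following the arc built so far until it first meets the next drawn
edge, and that edge from there on, shows inductively that their union contains a simple arc `γ_e`
between the branch vertices. A point of `γ_e` other than its ends that lies on another path is a
crossing, and there are at most `k` crossings, so `k - 1` cut points avoiding the crossings split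
`γ_e` into `k` pieces with at most one crossing each. Drawing the subdivision vertices at the cut
points and the edges along the pieces creates no new crossing.
-/

open Set

section Arcs

variable {X : Type*} [TopologicalSpace X]

structure IsArc (γ : ℝ → X) (x y : X) : Prop where
  continuous : Continuous γ
  injOn : InjOn γ (Icc 0 1)
  apply_zero : γ 0 = x
  apply_one : γ 1 = y

lemma isArc_projIcc {γ : ℝ → X} (hc : ContinuousOn γ (Icc 0 1)) (hi : InjOn γ (Icc 0 1)) :
    IsArc (fun u => γ (projIcc 0 1 zero_le_one u)) (γ 0) (γ 1) ∧
      (fun u : ℝ => γ (projIcc 0 1 zero_le_one u)) '' Icc 0 1 = γ '' Icc 0 1 := by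
  have hproj : EqOn (fun u => γ (projIcc 0 1 zero_le_one u)) γ (Icc 0 1) := fun u hu => by
    simp only [projIcc_of_mem _ hu]
  refine ⟨⟨hc.comp_continuous (continuous_subtype_val.comp continuous_projIcc)
    fun u => (projIcc 0 1 _ u).2, (hproj.injOn_iff).2 hi, ?_, ?_⟩, hproj.image_eq⟩
  · simp
  · simp

lemma IsArc.reverse {γ : ℝ → X} {x y : X} (h : IsArc γ x y) :
    IsArc (fun u => γ (1 - u)) y x where
  continuous := h.continuous.comp (by fun_prop)
  injOn u hu v hv huv := by
    have := h.injOn (x₁ := 1 - u) ⟨by linarith [hu.2], by linarith [hu.1]⟩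
      ⟨by linarith [hv.2], by linarith [hv.1]⟩ huv
    linarith
  apply_zero := by simpa using h.apply_one
  apply_one := by simpa using h.apply_zero

lemma image_reverse_Icc {Y : Type*} (γ : ℝ → Y) :
    (fun u => γ (1 - u)) '' Icc 0 1 = γ '' Icc 0 1 := by
  rw [show (fun u => γ (1 - u)) = γ ∘ (fun u => 1 - u) from rfl, image_comp,
    image_const_sub_Icc]
  norm_num

lemma injOn_ite_le {Y : Type*} {f g : ℝ → Y} {a s b : ℝ} (hf : InjOn f (Icc a s))
    (hg : InjOn g (Ioc s b)) (hfg : ∀ r ∈ Icc a s, ∀ r' ∈ Ioc s b, f r ≠ g r') :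
    InjOn (fun r => if r ≤ s then f r else g r) (Icc a b) := by
  intro r hr r' hr' h
  simp only at h
  split_ifs at h with h1 h2 h2
  · exact hf ⟨hr.1, h1⟩ ⟨hr'.1, h2⟩ h
  · exact absurd h (hfg r ⟨hr.1, h1⟩ r' ⟨not_le.1 h2, hr'.2⟩)
  · exact absurd h.symm (hfg r' ⟨hr'.1, h2⟩ r ⟨not_le.1 h1, hr.2⟩)
  · exact hg ⟨not_le.1 h1, hr.2⟩ ⟨not_le.1 h2, hr'.2⟩ h

lemma IsArc.exists_isArc_subset_union [T2Space X] {γ δ : ℝ → X} {x y z : X}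
    (hγ : IsArc γ x y) (hδ : IsArc δ y z) (hxz : x ≠ z) :
    ∃ φ, IsArc φ x z ∧ φ '' Icc 0 1 ⊆ γ '' Icc 0 1 ∪ δ '' Icc 0 1 := by
  have hK : IsCompact (Icc 0 1 ∩ γ ⁻¹' (δ '' Icc 0 1)) := isCompact_Icc.inter_right
    ((isCompact_Icc.image hδ.continuous).isClosed.preimage hγ.continuous)
  obtain ⟨s, ⟨hs, u, hu, hus⟩, hsmin⟩ := hK.exists_isLeast
    ⟨1, right_mem_Icc.2 zero_le_one, 0, left_mem_Icc.2 zero_le_one, by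
      rw [hγ.apply_one, hδ.apply_zero]⟩
  set L := s + (1 - u)
  have hL : 0 < L := by
    by_contra! hL
    rw [show s = 0 by linarith [hs.1, hu.2], show u = 1 by linarith [hs.1, hu.2],
      hγ.apply_zero, hδ.apply_one] at hus
    exact hxz hus.symm
  have hmem : ∀ r ∈ Ioc s L, r - s + u ∈ Icc (0 : ℝ) 1 := fun r hr =>
    ⟨by linarith [hu.1, hr.1], by linarith [hr.2]⟩
  set φ₀ : ℝ → X := fun r => if r ≤ s then γ r else δ (r - s + u)
  have hinj : InjOn φ₀ (Icc 0 L) := by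
    refine injOn_ite_le (hγ.injOn.mono (Icc_subset_Icc le_rfl hs.2))
      (fun r hr r' hr' h => by linarith [hδ.injOn (hmem r hr) (hmem r' hr') h])
      fun r hr r' hr' h => ?_
    have : s ≤ r := hsmin ⟨⟨hr.1, hr.2.trans hs.2⟩, _, hmem r' hr', h.symm⟩
    have := hδ.injOn hu (hmem r' hr') (by rw [hus, ← h, le_antisymm hr.2 this])
    linarith [hr'.1]
  have hmaps : MapsTo (fun r => L * r) (Icc 0 1) (Icc 0 L) := fun r hr =>
    ⟨by nlinarith [hr.1], by nlinarith [hr.2]⟩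
  refine ⟨fun r => φ₀ (L * r), ⟨?_, ?_, ?_, ?_⟩, ?_⟩
  · refine Continuous.comp (g := φ₀) ?_ (continuous_const_mul L)
    refine Continuous.if_le hγ.continuous (hδ.continuous.comp (by fun_prop)) continuous_id
      continuous_const fun r hr => ?_
    simp [hr, hus]
  · exact hinj.comp (fun r _ r' _ h => mul_left_cancel₀ hL.ne' h) hmaps
  · simp [φ₀, hs.1, hγ.apply_zero]
  · simp only [φ₀, mul_one]
    split_ifs with h
    · rw [← hδ.apply_one, show L = s by linarith [hu.2], ← hus, show u = 1 by linarith [hu.2]]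
    · rw [← hδ.apply_one]
      congr 1
      ring
  · rintro _ ⟨r, hr, rfl⟩
    simp only [φ₀]
    split_ifs with h
    · exact Or.inl ⟨_, ⟨by nlinarith [hr.1], h.trans hs.2⟩, rfl⟩
    · exact Or.inr ⟨_, hmem _ ⟨not_le.1 h, (hmaps hr).2⟩, rfl⟩

lemma exists_isArc_of_chain [T2Space X] {n : ℕ} (hn : 1 ≤ n) (P : ℕ → X) (A : Set X)
    (hP : ∀ j, 0 < j → j ≤ n → P 0 ≠ P j)
    (hq : ∀ j < n, ∃ q, IsArc q (P j) (P (j + 1)) ∧ q '' Icc 0 1 ⊆ A) :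
    ∃ γ, IsArc γ (P 0) (P n) ∧ γ '' Icc 0 1 ⊆ A := by
  induction n, hn using Nat.le_induction with
  | base => simpa using hq 0 one_pos
  | succ n hn ih =>
    obtain ⟨γ, hγ, hγA⟩ := ih (fun j hj hjn => hP j hj (by omega)) fun j hj => hq j (by omega)
    obtain ⟨q, hq, hqA⟩ := hq n (by omega)
    obtain ⟨φ, hφ, hφA⟩ := hγ.exists_isArc_subset_union hq (hP (n + 1) (by omega) le_rfl)
    exact ⟨φ, hφ, hφA.trans (union_subset hγA hqA)⟩

end Arcs

lemma exists_interlacing_cuts {k : ℕ} (hk : 1 ≤ k) {u : Fin k → ℝ} (hu : StrictMono u)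
    (hu01 : ∀ c, u c ∈ Ioo 0 1) :
    ∃ t : ℕ → ℝ, t 0 = 0 ∧ t k = 1 ∧
      ∀ c : Fin k, ∀ j ≤ k, (c.val < j → u c < t j) ∧ (j ≤ c.val → t j < u c) := by
  refine ⟨fun j => if j = 0 then 0 else if h : j < k then (u ⟨j - 1, by omega⟩ + u ⟨j, h⟩) / 2
    else 1, by simp, by simp; omega, fun c j hj => ⟨fun hcj => ?_, fun hjc => ?_⟩⟩
  · have hc := hu01 c
    dsimp only
    rw [if_neg (by omega)]
    split_ifs with h
    · have := hu.monotone (show c ≤ ⟨j - 1, by omega⟩ from Fin.mk_le_mk.2 (by omega))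
      have := hu (show (⟨j - 1, by omega⟩ : Fin k) < ⟨j, h⟩ from Fin.mk_lt_mk.2 (by omega))
      linarith
    · linarith [hc.2]
  · have hc := hu01 c
    dsimp only
    split_ifs with h0 h
    · exact hc.1
    · have := hu.monotone (show ⟨j, h⟩ ≤ c from Fin.mk_le_mk.2 hjc)
      have := hu (show (⟨j - 1, by omega⟩ : Fin k) < ⟨j, h⟩ from Fin.mk_lt_mk.2 (by omega))
      linarith
    · omega

lemma exists_cuts_separating {S : Set ℝ} (hS : S.Finite) (hS01 : S ⊆ Ioo 0 1) {k : ℕ}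
    (hk : 1 ≤ k) (hSk : S.ncard ≤ k) :
    ∃ t : ℕ → ℝ, t 0 = 0 ∧ t k = 1 ∧ StrictMonoOn t (Iic k) ∧ (∀ j ≤ k, t j ∉ S) ∧
      ∀ j < k, (S ∩ Icc (t j) (t (j + 1))).Subsingleton := by
  obtain ⟨R, hSR, hR01, hRk⟩ := (Ioo_infinite zero_lt_one).exists_superset_ncard_eq hS01 hS hSk
  have hR : R.Finite := finite_of_ncard_ne_zero (by omega)
  set u : Fin k ↪o ℝ := hR.toFinset.orderEmbOfFin (by rwa [← ncard_eq_toFinset_card R hR])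
  have hSu : S ⊆ range u := by
    rwa [Finset.range_orderEmbOfFin, Finite.coe_toFinset]
  obtain ⟨t, ht0, htk, ht⟩ := exists_interlacing_cuts hk (u := u) u.strictMono fun c =>
    hR01 ((Finite.mem_toFinset hR).1 (Finset.orderEmbOfFin_mem _ _ c))
  refine ⟨t, ht0, htk, fun a ha b hb hab => ?_, fun j hj hjS => ?_, fun j hj x hx y hy => ?_⟩
  · have hak : a < k := lt_of_lt_of_le hab hb
    exact ((ht ⟨a, hak⟩ a hak.le).2 le_rfl).trans ((ht ⟨a, hak⟩ b hb).1 hab)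
  · obtain ⟨c, hc⟩ := hSu hjS
    have := ht c j hj
    rcases lt_or_ge c.val j with h | h
    · exact (this.1 h).ne hc
    · exact (this.2 h).ne' hc
  · have hpiece : S ∩ Icc (t j) (t (j + 1)) ⊆ {u ⟨j, hj⟩} := by
      rintro _ ⟨hxS, hx1, hx2⟩
      obtain ⟨c, rfl⟩ := hSu hxS
      have h1 := ht c j hj.le
      have h2 := ht c (j + 1) hj
      have : c = ⟨j, hj⟩ := Fin.ext (show c.val = j by
        by_contra hne
        rcases lt_or_gt_of_ne hne with h | h
        · linarith [h1.1 h]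
        · linarith [h2.2 (by omega)])
      exact this ▸ rfl
    exact (hpiece hx).trans (hpiece hy).symm

lemma Set.InjOn.exists_cuts {X : Type*} {γ : ℝ → X} (hγ : InjOn γ (Icc 0 1)) {C : Set X}
    (hC : C.Finite) {k : ℕ} (hk : 1 ≤ k) (hCk : C.ncard ≤ k) (h0 : γ 0 ∉ C) (h1 : γ 1 ∉ C) :
    ∃ t : ℕ → ℝ, t 0 = 0 ∧ t k = 1 ∧ StrictMonoOn t (Iic k) ∧ (∀ j ≤ k, γ (t j) ∉ C) ∧
      ∀ j < k, {s ∈ Icc (t j) (t (j + 1)) | γ s ∈ C}.Subsingleton := by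
  set S := {s ∈ Icc (0 : ℝ) 1 | γ s ∈ C}
  have hinj : InjOn γ S := hγ.mono fun _ hs => hs.1
  have hS01 : S ⊆ Ioo 0 1 := fun s ⟨hs, hsC⟩ =>
    ⟨hs.1.lt_of_ne (by rintro rfl; exact h0 hsC), hs.2.lt_of_ne (by rintro rfl; exact h1 hsC)⟩
  obtain ⟨t, ht0, htk, hmono, htS, hpiece⟩ := exists_cuts_separating
    ((hC.subset (image_subset_iff.2 fun _ hs => hs.2)).of_finite_image hinj) hS01 hk
    ((ncard_le_ncard_of_injOn γ (fun _ hs => hs.2) hinj hC).trans hCk)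
  have htI : ∀ j ≤ k, t j ∈ Icc (0 : ℝ) 1 := fun j hj =>
    ⟨ht0 ▸ hmono.monotoneOn (Nat.zero_le k) hj (Nat.zero_le j),
      htk ▸ hmono.monotoneOn hj (mem_Iic.2 le_rfl) hj⟩
  refine ⟨t, ht0, htk, hmono, fun j hj htC => htS j hj ⟨htI j hj, htC⟩, fun j hj => ?_⟩
  refine (hpiece j hj).anti fun s ⟨hs, hsC⟩ => ⟨⟨?_, hsC⟩, hs⟩
  exact ⟨(htI j hj.le).1.trans hs.1, hs.2.trans (htI (j + 1) hj).2⟩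

lemma image_lineMap_Icc {a b : ℝ} (h : a ≤ b) :
    AffineMap.lineMap a b '' Icc (0 : ℝ) 1 = Icc a b :=
  (segment_eq_image_lineMap ℝ a b).symm.trans (segment_eq_Icc h)

lemma image_lineMap_Ioo {a b : ℝ} (h : a < b) :
    AffineMap.lineMap a b '' Ioo (0 : ℝ) 1 = Ioo a b :=
  (openSegment_eq_image_lineMap ℝ a b).symm.trans (openSegment_eq_Ioo h)

namespace MGraph

variable {G : MGraph} {k : ℕ}

lemma subdivVert_zero (e : G.E) : G.subdivVert k e 0 = .inl (Quot.out (G.ends e)).1 :=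
  dif_pos rfl

lemma subdivVert_of_pos_of_lt (e : G.E) {m : ℕ} (h0 : 0 < m) (hm : m < k) :
    G.subdivVert k e m = .inr (e, ⟨m - 1, by omega⟩) := by
  rw [subdivVert, dif_neg h0.ne', dif_pos hm]

lemma subdivVert_self (hk : k ≠ 0) (e : G.E) :
    G.subdivVert k e k = .inl (Quot.out (G.ends e)).2 := by
  rw [subdivVert, dif_neg hk, dif_neg (lt_irrefl k)]

lemma inr_eq_subdivVert (e : G.E) (j : Fin (k - 1)) :
    (.inr (e, j) : (G.subdivide k).V) = G.subdivVert k e (j + 1) := by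
  rw [subdivVert_of_pos_of_lt e j.val.succ_pos (by omega)]
  rfl

lemma subdivVert_injOn (e : G.E) : InjOn (G.subdivVert k e) (Iic k) := by
  intro m hm m' hm' h
  simp only [mem_Iic] at hm hm'
  have hout := sym2_out_ne _ (G.loopless e)
  rcases (by omega : m = 0 ∨ (0 < m ∧ m < k) ∨ (m = k ∧ k ≠ 0)) with
    rfl | ⟨h0, hlt⟩ | ⟨hmk, hk⟩ <;>
  rcases (by omega : m' = 0 ∨ (0 < m' ∧ m' < k) ∨ (m' = k ∧ k ≠ 0)) with
    rfl | ⟨h0', hlt'⟩ | ⟨hmk', hk'⟩ <;>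
  simp_all [subdivVert_zero, subdivVert_of_pos_of_lt, subdivVert_self]
  omega

lemma subdivVert_eq_inr {e : G.E} {m : ℕ} (hm : m ≤ k) {p : G.E × Fin (k - 1)}
    (h : G.subdivVert k e m = .inr p) : p.1 = e := by
  rcases Nat.eq_zero_or_pos m with rfl | h0
  · simp [subdivVert_zero] at h
  rcases hm.lt_or_eq with hm | rfl
  · rw [subdivVert_of_pos_of_lt e h0 hm, Sum.inr.injEq] at h
    rw [← h]
  · simp [subdivVert_self h0.ne'] at h

lemma subdivVert_eq_subdivVert {e f : G.E} (hef : e ≠ f) {m m' : ℕ} (hm : m ≤ k)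
    (hm' : m' ≤ k) (h : G.subdivVert k e m = G.subdivVert k f m') : m = 0 ∨ m = k := by
  by_contra! hmid
  rw [subdivVert_of_pos_of_lt e (Nat.pos_of_ne_zero hmid.1) (hm.lt_of_ne hmid.2)] at h
  exact hef (subdivVert_eq_inr hm' h.symm)

lemma mem_subdivide_ends {w : (G.subdivide k).V} {e : G.E} {i : Fin k} :
    w ∈ (G.subdivide k).ends (e, i) ↔ w = G.subdivVert k e i ∨ w = G.subdivVert k e (i + 1) :=
  Sym2.mem_iff

lemma eq_subdivVert_of_mem_ends {w : (G.subdivide k).V} {e : G.E} {i : Fin k}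
    (h : w ∈ (G.subdivide k).ends (e, i)) : ∃ m ≤ k, w = G.subdivVert k e m := by
  rcases mem_subdivide_ends.1 h with h | h
  exacts [⟨i, i.2.le, h⟩, ⟨i + 1, i.2, h⟩]

lemma eq_subdivVert_of_mem_ends_of_mem_ends {w : (G.subdivide k).V} {e f : G.E} (hef : e ≠ f)
    {i j : Fin k} (he : w ∈ (G.subdivide k).ends (e, i))
    (hf : w ∈ (G.subdivide k).ends (f, j)) :
    w = G.subdivVert k e 0 ∨ w = G.subdivVert k e k := by
  obtain ⟨m, hm, rfl⟩ := eq_subdivVert_of_mem_ends he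
  obtain ⟨m', hm', h⟩ := eq_subdivVert_of_mem_ends hf
  rcases subdivVert_eq_subdivVert hef hm hm' h with rfl | rfl
  exacts [Or.inl rfl, Or.inr rfl]

end MGraph

namespace Drawing

section General

variable {G : MGraph} (Δ : Drawing G)

lemma exists_isArc_of_ends {p : G.E} {v w : G.V} (h : G.ends p = s(v, w)) :
    ∃ q, IsArc q (Δ.vpos v) (Δ.vpos w) ∧ q '' Icc 0 1 = Δ.arc p := by
  obtain ⟨v', w', hvw, h0, h1⟩ := Δ.ends_match p
  obtain ⟨hq, himage⟩ := isArc_projIcc (Δ.par_cont p) (Δ.par_inj p)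
  rw [h0, h1] at hq
  rcases Sym2.eq_iff.1 (hvw.symm.trans h) with ⟨rfl, rfl⟩ | ⟨rfl, rfl⟩
  · exact ⟨_, hq, himage⟩
  · exact ⟨_, hq.reverse, (image_reverse_Icc _).trans himage⟩

lemma mem_crossings_or_mem_ends {e f : G.E} (hef : e ≠ f) {x : ℝ × ℝ} (he : x ∈ Δ.arc e)
    (hf : x ∈ Δ.arc f) :
    x ∈ Δ.crossings ∨ ∃ v, Δ.vpos v = x ∧ v ∈ G.ends e ∧ v ∈ G.ends f := by
  by_cases hx : x ∈ range Δ.vpos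
  · obtain ⟨v, rfl⟩ := hx
    exact Or.inr ⟨v, rfl, Δ.vertex_on_arc e v he, Δ.vertex_on_arc f v hf⟩
  · exact Or.inl ⟨hx, e, f, hef, he, hf⟩

lemma vpos_notMem_crossings (v : G.V) : Δ.vpos v ∉ Δ.crossings := fun h => h.1 ⟨v, rfl⟩

end General

variable {G : MGraph} {k : ℕ}

/-- A new drawing of the path replacing `e`: its `j`-th vertex goes to `curve (cut j)` and its
`j`-th edge along `curve` between `cut j` and `cut (j + 1)`. -/
structure Rerouting (Δ : Drawing (G.subdivide k)) (e : G.E) where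
  curve : ℝ → ℝ × ℝ
  cut : ℕ → ℝ
  isArc : IsArc curve (Δ.vpos (G.subdivVert k e 0)) (Δ.vpos (G.subdivVert k e k))
  image_subset : curve '' Icc 0 1 ⊆ ⋃ j, Δ.arc (e, j)
  cut_zero : cut 0 = 0
  cut_self : cut k = 1
  strictMonoOn_cut : StrictMonoOn cut (Iic k)
  curve_cut_notMem : ∀ j ≤ k, curve (cut j) ∉ Δ.crossings
  subsingleton : ∀ j < k, {s ∈ Icc (cut j) (cut (j + 1)) | curve s ∈ Δ.crossings}.Subsingleton

lemma exists_rerouting (Δ : Drawing (G.subdivide k)) (hk : 1 ≤ k) (hfin : Δ.crossings.Finite)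
    (hcard : Δ.crossings.ncard ≤ k) (e : G.E) : Nonempty (Δ.Rerouting e) := by
  obtain ⟨γ, hγ, hγA⟩ := exists_isArc_of_chain hk (fun j => Δ.vpos (G.subdivVert k e j))
    (⋃ j, Δ.arc (e, j))
    (fun j hj hjk h => hj.ne (G.subdivVert_injOn e (Nat.zero_le k) hjk (Δ.vpos_inj h)))
    fun j hj => by
      obtain ⟨q, hq, hqA⟩ := Δ.exists_isArc_of_ends (p := (e, ⟨j, hj⟩)) rfl
      exact ⟨q, hq, hqA ▸ subset_iUnion (fun i => Δ.arc (e, i)) _⟩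
  obtain ⟨t, ht0, htk, hmono, htC, hpiece⟩ := hγ.injOn.exists_cuts hfin hk hcard
    (hγ.apply_zero ▸ Δ.vpos_notMem_crossings _) (hγ.apply_one ▸ Δ.vpos_notMem_crossings _)
  exact ⟨⟨γ, t, hγ, hγA, ht0, htk, hmono, htC, hpiece⟩⟩

namespace Rerouting

variable {Δ : Drawing (G.subdivide k)} {e : G.E}

lemma one_le (R : Δ.Rerouting e) : 1 ≤ k := by
  by_contra! hk
  have := congrArg R.cut (Nat.lt_one_iff.1 hk)
  rw [R.cut_self, R.cut_zero] at this
  exact one_ne_zero this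

variable (R : Δ.Rerouting e)

lemma cut_mem_Icc {j : ℕ} (hj : j ≤ k) : R.cut j ∈ Icc 0 1 :=
  ⟨R.cut_zero ▸ R.strictMonoOn_cut.monotoneOn (Nat.zero_le k) hj (Nat.zero_le j),
    R.cut_self ▸ R.strictMonoOn_cut.monotoneOn hj (mem_Iic.2 le_rfl) hj⟩

lemma cut_mem_Ioo {j : ℕ} (h0 : 0 < j) (hj : j < k) : R.cut j ∈ Ioo 0 1 :=
  ⟨R.cut_zero ▸ R.strictMonoOn_cut (Nat.zero_le k) hj.le h0,
    R.cut_self ▸ R.strictMonoOn_cut hj.le (mem_Iic.2 le_rfl) hj⟩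

lemma cut_lt_cut_succ {i : ℕ} (hi : i < k) : R.cut i < R.cut (i + 1) :=
  R.strictMonoOn_cut (mem_Iic.2 hi.le) (mem_Iic.2 hi) i.lt_succ_self

lemma cut_succ_le_cut {i i' : ℕ} (h : i < i') (hi' : i' ≤ k) : R.cut (i + 1) ≤ R.cut i' :=
  R.strictMonoOn_cut.monotoneOn (mem_Iic.2 (by omega)) hi' h

lemma Icc_cut_subset {i : ℕ} (hi : i < k) : Icc (R.cut i) (R.cut (i + 1)) ⊆ Icc 0 1 :=
  Icc_subset_Icc (R.cut_mem_Icc hi.le).1 (R.cut_mem_Icc hi).2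

lemma Ioo_cut_subset {i : ℕ} (hi : i < k) : Ioo (R.cut i) (R.cut (i + 1)) ⊆ Ioo 0 1 :=
  Ioo_subset_Ioo (R.cut_mem_Icc hi.le).1 (R.cut_mem_Icc hi).2

lemma eq_cut_of_mem_Icc_of_mem_Icc {i i' : ℕ} (h : i < i') (hi' : i' < k) {s : ℝ}
    (hs : s ∈ Icc (R.cut i) (R.cut (i + 1))) (hs' : s ∈ Icc (R.cut i') (R.cut (i' + 1))) :
    s = R.cut i' :=
  le_antisymm (hs.2.trans (R.cut_succ_le_cut h hi'.le)) hs'.1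

lemma disjoint_Ioo_cut {i i' : ℕ} (h : i ≠ i') (hi : i < k) (hi' : i' < k) :
    Disjoint (Ioo (R.cut i) (R.cut (i + 1))) (Ioo (R.cut i') (R.cut (i' + 1))) := by
  rcases h.lt_or_gt with h | h
  · exact disjoint_left.2 fun s hs hs' =>
      (hs.2.trans_le (R.cut_succ_le_cut h hi'.le)).not_gt hs'.1
  · exact disjoint_left.2 fun s hs hs' =>
      (hs'.2.trans_le (R.cut_succ_le_cut h hi.le)).not_gt hs.1

lemma eq_or_eq_succ_of_cut_mem_Icc {m i : ℕ} (hm : m ≤ k) (hi : i < k)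
    (h : R.cut m ∈ Icc (R.cut i) (R.cut (i + 1))) : m = i ∨ m = i + 1 := by
  have h1 := (R.strictMonoOn_cut.le_iff_le (mem_Iic.2 hi.le) hm).1 h.1
  have h2 := (R.strictMonoOn_cut.le_iff_le hm (mem_Iic.2 hi)).1 h.2
  omega

lemma curve_mem_crossings {f : G.E} (hef : e ≠ f) {s : ℝ} (hs : s ∈ Ioo 0 1)
    (hf : R.curve s ∈ ⋃ j, Δ.arc (f, j)) : R.curve s ∈ Δ.crossings := by
  obtain ⟨j, hj⟩ := mem_iUnion.1 (R.image_subset ⟨s, Ioo_subset_Icc_self hs, rfl⟩)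
  obtain ⟨j', hj'⟩ := mem_iUnion.1 hf
  refine (Δ.mem_crossings_or_mem_ends (fun h => hef (congrArg Prod.fst h)) hj hj').resolve_right
    ?_
  rintro ⟨v, hv, he, hf⟩
  rcases G.eq_subdivVert_of_mem_ends_of_mem_ends hef he hf with rfl | rfl
  · rw [← R.isArc.apply_zero] at hv
    exact hs.1.ne (R.isArc.injOn (left_mem_Icc.2 zero_le_one) (Ioo_subset_Icc_self hs) hv)
  · rw [← R.isArc.apply_one] at hv
    exact hs.2.ne' (R.isArc.injOn (right_mem_Icc.2 zero_le_one) (Ioo_subset_Icc_self hs) hv)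

end Rerouting

section Redraw

variable {Δ : Drawing (G.subdivide k)} (R : ∀ e, Δ.Rerouting e)

def redrawVpos : (G.subdivide k).V → ℝ × ℝ
  | .inl a => Δ.vpos (.inl a)
  | .inr (e, j) => (R e).curve ((R e).cut (j + 1))

def redrawPar (p : (G.subdivide k).E) : ℝ → ℝ × ℝ :=
  (R p.1).curve ∘ AffineMap.lineMap ((R p.1).cut p.2) ((R p.1).cut (p.2 + 1))

lemma redrawVpos_subdivVert_zero (e : G.E) :
    redrawVpos R (G.subdivVert k e 0) = Δ.vpos (G.subdivVert k e 0) := by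
  rw [G.subdivVert_zero]
  rfl

lemma redrawVpos_subdivVert_self (e : G.E) :
    redrawVpos R (G.subdivVert k e k) = Δ.vpos (G.subdivVert k e k) := by
  rw [G.subdivVert_self (Nat.one_le_iff_ne_zero.1 (R e).one_le)]
  rfl

lemma redrawVpos_subdivVert (e : G.E) {m : ℕ} (hm : m ≤ k) :
    redrawVpos R (G.subdivVert k e m) = (R e).curve ((R e).cut m) := by
  rcases Nat.eq_zero_or_pos m with rfl | h0
  · rw [(R e).cut_zero, (R e).isArc.apply_zero, redrawVpos_subdivVert_zero]
  rcases hm.lt_or_eq with hm | rfl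
  · rw [G.subdivVert_of_pos_of_lt e h0 hm]
    simp only [redrawVpos, Nat.sub_add_cancel h0]
  · rw [(R e).cut_self, (R e).isArc.apply_one, redrawVpos_subdivVert_self]

lemma image_redrawPar_Icc (p : (G.subdivide k).E) :
    redrawPar R p '' Icc 0 1 =
      (R p.1).curve '' Icc ((R p.1).cut p.2) ((R p.1).cut (p.2 + 1)) := by
  rw [redrawPar, image_comp, image_lineMap_Icc ((R p.1).cut_lt_cut_succ p.2.2).le]

lemma image_redrawPar_Ioo (p : (G.subdivide k).E) :
    redrawPar R p '' Ioo 0 1 =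
      (R p.1).curve '' Ioo ((R p.1).cut p.2) ((R p.1).cut (p.2 + 1)) := by
  rw [redrawPar, image_comp, image_lineMap_Ioo ((R p.1).cut_lt_cut_succ p.2.2)]

lemma image_redrawPar_subset (p : (G.subdivide k).E) :
    redrawPar R p '' Icc 0 1 ⊆ ⋃ j, Δ.arc (p.1, j) := by
  rw [image_redrawPar_Icc]
  exact (image_mono ((R p.1).Icc_cut_subset p.2.2)).trans (R p.1).image_subset

lemma eq_subdivVert_of_redrawVpos_mem {w : (G.subdivide k).V} {e : G.E}
    (h : redrawVpos R w ∈ (R e).curve '' Icc 0 1) : ∃ m ≤ k, w = G.subdivVert k e m := by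
  rcases w with a | ⟨f, j⟩
  · obtain ⟨i, hi⟩ := mem_iUnion.1 ((R e).image_subset h)
    exact G.eq_subdivVert_of_mem_ends (Δ.vertex_on_arc _ _ hi)
  by_cases hfe : f = e
  · exact ⟨j + 1, by omega, hfe ▸ G.inr_eq_subdivVert f j⟩
  have hj : j.val + 1 < k := by omega
  exact absurd ((R f).curve_mem_crossings hfe ((R f).cut_mem_Ioo j.val.succ_pos hj)
    ((R e).image_subset h)) ((R f).curve_cut_notMem _ hj.le)

lemma eq_subdivVert_of_redrawVpos_eq {w : (G.subdivide k).V} {e : G.E} {m : ℕ} (hm : m ≤ k)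
    (h : redrawVpos R w = redrawVpos R (G.subdivVert k e m)) : w = G.subdivVert k e m := by
  rw [redrawVpos_subdivVert R e hm] at h
  obtain ⟨m', hm', rfl⟩ :=
    eq_subdivVert_of_redrawVpos_mem R ⟨_, (R e).cut_mem_Icc hm, h.symm⟩
  rw [redrawVpos_subdivVert R e hm'] at h
  rw [(R e).strictMonoOn_cut.injOn hm' hm
    ((R e).isArc.injOn ((R e).cut_mem_Icc hm') ((R e).cut_mem_Icc hm) h)]

lemma redrawVpos_injective : Function.Injective (redrawVpos R) := by
  have key : ∀ w f (j : Fin (k - 1)), redrawVpos R w = redrawVpos R (.inr (f, j)) →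
      w = .inr (f, j) := fun w f j h => by
    rw [G.inr_eq_subdivVert] at h ⊢
    exact eq_subdivVert_of_redrawVpos_eq R (by omega) h
  rintro (a | ⟨f, j⟩) (b | ⟨f', j'⟩) h
  · exact Δ.vpos_inj h
  · exact key _ _ _ h
  · exact (key _ _ _ h.symm).symm
  · exact key _ _ _ h

lemma eq_of_mem_redrawPar_of_mem_redrawPar {x : ℝ × ℝ} (hx : x ∉ range (redrawVpos R))
    {p q : (G.subdivide k).E} (hp : x ∈ redrawPar R p '' Icc 0 1)
    (hq : x ∈ redrawPar R q '' Icc 0 1) (hpq : p.1 = q.1) : p = q := by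
  rw [image_redrawPar_Icc] at hp hq
  obtain ⟨s, hs, rfl⟩ := hp
  obtain ⟨s', hs', hss'⟩ := hq
  rw [← hpq] at hs' hss'
  set R' := R p.1
  rw [R'.isArc.injOn (R'.Icc_cut_subset q.2.2 hs') (R'.Icc_cut_subset p.2.2 hs) hss'] at hs'
  have key : ∀ a b : Fin k, a < b → s ∈ Icc (R'.cut a) (R'.cut (a + 1)) →
      s ∈ Icc (R'.cut b) (R'.cut (b + 1)) → False := fun a b hab ha hb => by
    refine hx ⟨G.subdivVert k p.1 b, ?_⟩
    rw [redrawVpos_subdivVert R _ b.2.le, R'.eq_cut_of_mem_Icc_of_mem_Icc hab b.2 ha hb]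
  rcases lt_trichotomy p.2 q.2 with h | h | h
  exacts [(key _ _ h hs hs').elim, Prod.ext hpq h, (key _ _ h hs' hs).elim]

lemma notMem_range_vpos_of_notMem_range_redrawVpos {e f : G.E} (hef : e ≠ f) {x : ℝ × ℝ}
    (he : x ∈ ⋃ j, Δ.arc (e, j)) (hf : x ∈ ⋃ j, Δ.arc (f, j)) (hx : x ∉ range (redrawVpos R)) :
    x ∉ range Δ.vpos := by
  rintro ⟨v, rfl⟩
  obtain ⟨j, hj⟩ := mem_iUnion.1 he
  obtain ⟨j', hj'⟩ := mem_iUnion.1 hf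
  rcases G.eq_subdivVert_of_mem_ends_of_mem_ends hef (Δ.vertex_on_arc _ _ hj)
    (Δ.vertex_on_arc _ _ hj') with rfl | rfl
  exacts [hx ⟨_, redrawVpos_subdivVert_zero R e⟩, hx ⟨_, redrawVpos_subdivVert_self R e⟩]

lemma mem_crossings_of_mem_redrawPar {x : ℝ × ℝ} (hx : x ∉ range (redrawVpos R))
    {p q : (G.subdivide k).E} (hpq : p ≠ q) (hp : x ∈ redrawPar R p '' Icc 0 1)
    (hq : x ∈ redrawPar R q '' Icc 0 1) : x ∈ Δ.crossings := by
  have hef : p.1 ≠ q.1 := fun h => hpq (eq_of_mem_redrawPar_of_mem_redrawPar R hx hp hq h)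
  have he := image_redrawPar_subset R p hp
  have hf := image_redrawPar_subset R q hq
  obtain ⟨j, hj⟩ := mem_iUnion.1 he
  obtain ⟨j', hj'⟩ := mem_iUnion.1 hf
  exact ⟨notMem_range_vpos_of_notMem_range_redrawVpos R hef he hf hx, (p.1, j), (q.1, j'),
    fun h => hef (Prod.mk.inj h).1, hj, hj'⟩

lemma mem_ends_of_redrawVpos_mem {p : (G.subdivide k).E} {w : (G.subdivide k).V}
    (h : redrawVpos R w ∈ redrawPar R p '' Icc 0 1) : w ∈ (G.subdivide k).ends p := by
  rw [image_redrawPar_Icc] at h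
  obtain ⟨s, hs, hsw⟩ := h
  obtain ⟨m, hm, rfl⟩ :=
    eq_subdivVert_of_redrawVpos_mem R ⟨s, (R p.1).Icc_cut_subset p.2.2 hs, hsw⟩
  rw [redrawVpos_subdivVert R _ hm] at hsw
  rw [← (R p.1).isArc.injOn ((R p.1).cut_mem_Icc hm) ((R p.1).Icc_cut_subset p.2.2 hs) hsw.symm]
    at hs
  rcases (R p.1).eq_or_eq_succ_of_cut_mem_Icc hm p.2.2 hs with rfl | rfl
  exacts [G.mem_subdivide_ends.2 (Or.inl rfl), G.mem_subdivide_ends.2 (Or.inr rfl)]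

lemma subsingleton_redrawPar_Ioo_inter {p q : (G.subdivide k).E} (hpq : p ≠ q) :
    (redrawPar R p '' Ioo 0 1 ∩ redrawPar R q '' Ioo 0 1).Subsingleton := by
  rw [image_redrawPar_Ioo, image_redrawPar_Ioo]
  rintro _ ⟨⟨s, hs, rfl⟩, hsq⟩ _ ⟨⟨r, hr, rfl⟩, hrq⟩
  by_cases hpq1 : p.1 = q.1
  · obtain ⟨s', hs', hss'⟩ := hsq
    rw [← hpq1] at hs' hss'
    rw [(R p.1).isArc.injOn (Ioo_subset_Icc_self ((R p.1).Ioo_cut_subset q.2.2 hs'))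
      (Ioo_subset_Icc_self ((R p.1).Ioo_cut_subset p.2.2 hs)) hss'] at hs'
    exact absurd rfl (((R p.1).disjoint_Ioo_cut (fun h => hpq (Prod.ext hpq1 (Fin.ext h)))
      p.2.2 q.2.2).ne_of_mem hs hs')
  have hcross : ∀ u ∈ Ioo ((R p.1).cut p.2) ((R p.1).cut (p.2 + 1)),
      (R p.1).curve u ∈ (R q.1).curve '' Ioo ((R q.1).cut q.2) ((R q.1).cut (q.2 + 1)) →
      (R p.1).curve u ∈ Δ.crossings := fun u hu huq =>
    (R p.1).curve_mem_crossings hpq1 ((R p.1).Ioo_cut_subset p.2.2 hu) ((R q.1).image_subset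
      (image_mono (Ioo_subset_Icc_self.trans ((R q.1).Icc_cut_subset q.2.2)) huq))
  rw [(R p.1).subsingleton p.2 p.2.2 ⟨Ioo_subset_Icc_self hs, hcross s hs hsq⟩
    ⟨Ioo_subset_Icc_self hr, hcross r hr hrq⟩]

lemma redraw_at_most_two {x : ℝ × ℝ} (hx : x ∉ range (redrawVpos R))
    (p₁ p₂ p₃ : (G.subdivide k).E)
    (h₁ : x ∈ redrawPar R p₁ '' Icc 0 1) (h₂ : x ∈ redrawPar R p₂ '' Icc 0 1)
    (h₃ : x ∈ redrawPar R p₃ '' Icc 0 1) : p₁ = p₂ ∨ p₁ = p₃ ∨ p₂ = p₃ := by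
  by_cases h12 : p₁.1 = p₂.1
  · exact Or.inl (eq_of_mem_redrawPar_of_mem_redrawPar R hx h₁ h₂ h12)
  by_cases h13 : p₁.1 = p₃.1
  · exact Or.inr (Or.inl (eq_of_mem_redrawPar_of_mem_redrawPar R hx h₁ h₃ h13))
  by_cases h23 : p₂.1 = p₃.1
  · exact Or.inr (Or.inr (eq_of_mem_redrawPar_of_mem_redrawPar R hx h₂ h₃ h23))
  have hx₁ := image_redrawPar_subset R p₁ h₁
  have hx₂ := image_redrawPar_subset R p₂ h₂
  obtain ⟨j₁, hj₁⟩ := mem_iUnion.1 hx₁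
  obtain ⟨j₂, hj₂⟩ := mem_iUnion.1 hx₂
  obtain ⟨j₃, hj₃⟩ := mem_iUnion.1 (image_redrawPar_subset R p₃ h₃)
  rcases Δ.at_most_two x (notMem_range_vpos_of_notMem_range_redrawVpos R h12 hx₁ hx₂ hx) _ _ _
    hj₁ hj₂ hj₃ with h | h | h
  exacts [(h12 (Prod.mk.inj h).1).elim, (h13 (Prod.mk.inj h).1).elim,
    (h23 (Prod.mk.inj h).1).elim]

noncomputable def redraw : Drawing (G.subdivide k) where
  vpos := redrawVpos R
  par := redrawPar R
  par_cont p := ((R p.1).isArc.continuous.comp AffineMap.lineMap_continuous).continuousOn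
  par_inj p := (R p.1).isArc.injOn.comp
    (AffineMap.lineMap_injective ℝ ((R p.1).cut_lt_cut_succ p.2.2).ne).injOn fun u hu =>
      (R p.1).Icc_cut_subset p.2.2 (image_lineMap_Icc ((R p.1).cut_lt_cut_succ p.2.2).le ▸
        mem_image_of_mem _ hu)
  ends_match p := ⟨_, _, rfl, by simp [redrawPar, redrawVpos_subdivVert R _ p.2.2.le],
    by simp [redrawPar, redrawVpos_subdivVert R _ p.2.2]⟩
  vpos_inj := redrawVpos_injective R
  arcs_inter _ _ := subsingleton_redrawPar_Ioo_inter R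
  vertex_on_arc _ _ := mem_ends_of_redrawVpos_mem R
  at_most_two _ := redraw_at_most_two R

lemma crossings_redraw_subset : (Δ.redraw R).crossings ⊆ Δ.crossings :=
  fun _ ⟨hx, _, _, hpq, hp, hq⟩ => mem_crossings_of_mem_redrawPar R hx hpq hp hq

lemma subsingleton_crossings_redraw_arc (p : (G.subdivide k).E) :
    {x | (Δ.redraw R).IsCrossing x ∧ x ∈ (Δ.redraw R).arc p}.Subsingleton := by
  rintro _ ⟨hx, hxp⟩ _ ⟨hy, hyp⟩
  simp only [arc, redraw, image_redrawPar_Icc] at hxp hyp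
  obtain ⟨s, hs, rfl⟩ := hxp
  obtain ⟨r, hr, rfl⟩ := hyp
  rw [(R p.1).subsingleton p.2 p.2.2 ⟨hs, crossings_redraw_subset R hx⟩
    ⟨hr, crossings_redraw_subset R hy⟩]

end Redraw

end Drawing

/-- If the subdivision `G̃` of `G` (every edge subdivided `k - 1` times, `k ≥ 1`) has
a `k`-good drawing with respect to `F̃`, then it has a `k`-good drawing with respect
to `F̃` in which, additionally, every edge is involved in at most one crossing. -/
theorem subdivision_good_drawing_simple_crossings (k : ℕ) (hk : 1 ≤ k) (G : MGraph)
    (F : Set G.E)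
    (h : ∃ Δ : Drawing (G.subdivide k), Δ.IsGood k (G.subdivF k F)) :
    ∃ Δ : Drawing (G.subdivide k), Δ.IsGood k (G.subdivF k F) ∧
      ∀ e : (G.subdivide k).E, {x | Δ.IsCrossing x ∧ x ∈ Δ.arc e}.Subsingleton := by
  obtain ⟨Δ, ⟨hfin, hcard⟩, hF⟩ := h
  have R : ∀ e, Δ.Rerouting e := fun e => (Δ.exists_rerouting hk hfin hcard e).some
  have hsub := Δ.crossings_redraw_subset R
  refine ⟨Δ.redraw R, ⟨⟨hfin.subset hsub, (ncard_le_ncard hsub hfin).trans hcard⟩, ?_⟩,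
    Δ.subsingleton_crossings_redraw_arc R⟩
  rintro p hp ⟨x, hx, hxp⟩
  obtain ⟨j, hj⟩ := mem_iUnion.1 (Drawing.image_redrawPar_subset R p hxp)
  exact hF (p.1, j) hp ⟨x, hsub hx, hj⟩
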